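/- Let A, B be n×n positive definite matrices and a, b > 0. Then a²A + b²B + 2ab(A ♮ B) = W_{a,b}(A,B) if and only if A and B commute. -/

import Mathlib

/-!
Put `X = A⁻¹ # B`, so that `X A X = B`. The matrices `A X` and `X A` are similar to positive
definite ones and square to `A B` and `B A`; since principal square roots are unique,
`(AB)^{1/2} = A X` and `(BA)^{1/2} = X A`. With `U = X^{1/2}` we have `A ♮ B = U A U`, so the
equality says `2 U A U = A U² + U² A`, i.e. `U` commutes with the skew-Hermitian `C = A U - U A`,
and then `tr (Cᴴ C) = 0` forces `C = 0`. Thus `A` commutes with `X`, hence with `B = X A X`.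
Conversely, if `A` commutes with `B`, it commutes with `A⁻¹ # B` and with its square root.
-/

open Matrix ComplexOrder

namespace Matrix.PosSemidef

/-- Port: `Matrix.PosSemidef.sqrt` was removed from Mathlib; restored with its old definition. -/
noncomputable def sqrt {𝕜 : Type*} [RCLike 𝕜] {m : Type*} [Fintype m] [DecidableEq m]
    {A : Matrix m m 𝕜} (hA : A.PosSemidef) : Matrix m m 𝕜 :=
  hA.1.eigenvectorUnitary.1 * diagonal ((↑) ∘ (·.sqrt) ∘ hA.1.eigenvalues) *
    (star hA.1.eigenvectorUnitary : Matrix m m 𝕜)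

lemma posSemidef_sqrt {𝕜 : Type*} [RCLike 𝕜] {m : Type*} [Fintype m] [DecidableEq m]
    {A : Matrix m m 𝕜} (hA : A.PosSemidef) : PosSemidef hA.sqrt := by
  apply PosSemidef.mul_mul_conjTranspose_same
  refine posSemidef_diagonal_iff.mpr fun i ↦ ?_
  rw [Function.comp_apply, RCLike.nonneg_iff]
  constructor
  · simp only [Function.comp_apply, RCLike.ofReal_re]; exact Real.sqrt_nonneg _
  · simp only [Function.comp_apply, RCLike.ofReal_im]

end Matrix.PosSemidef

namespace Heron

variable {n : ℕ}

def WeakMaj {n : ℕ} (x y : Fin n → ℝ) : Prop :=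
  ∀ s : Finset (Fin n), ∃ t : Finset (Fin n),
    t.card = s.card ∧ ∑ i ∈ s, x i ≤ ∑ i ∈ t, y i

def Maj {n : ℕ} (x y : Fin n → ℝ) : Prop :=
  WeakMaj x y ∧ ∑ i, x i = ∑ i, y i

lemma sandwich_posSemidef {S T : Matrix (Fin n) (Fin n) ℂ} (hS : S.IsHermitian)
    (hT : T.PosSemidef) : (S * T * S).PosSemidef := by
  have h := hT.mul_mul_conjTranspose_same S
  rwa [hS.eq] at h

noncomputable def geomMean {A B : Matrix (Fin n) (Fin n) ℂ}
    (hA : A.PosDef) (hB : B.PosDef) : Matrix (Fin n) (Fin n) ℂ :=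
  hA.posSemidef.sqrt *
    (sandwich_posSemidef hA.posSemidef.posSemidef_sqrt.isHermitian.inv
        hB.posSemidef).sqrt *
    hA.posSemidef.sqrt

lemma geomMean_posSemidef {A B : Matrix (Fin n) (Fin n) ℂ}
    (hA : A.PosDef) (hB : B.PosDef) : (geomMean hA hB).PosSemidef :=
  sandwich_posSemidef hA.posSemidef.posSemidef_sqrt.isHermitian
    (Matrix.PosSemidef.posSemidef_sqrt _)

noncomputable def specMean {A B : Matrix (Fin n) (Fin n) ℂ}
    (hA : A.PosDef) (hB : B.PosDef) : Matrix (Fin n) (Fin n) ℂ :=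
  (geomMean_posSemidef hA.inv hB).sqrt * A * (geomMean_posSemidef hA.inv hB).sqrt

def HasPosSpectrum (M : Matrix (Fin n) (Fin n) ℂ) : Prop :=
  ∀ z ∈ spectrum ℂ M, 0 < z.re ∧ z.im = 0

def IsPrincipalSqrt (M S : Matrix (Fin n) (Fin n) ℂ) : Prop :=
  S * S = M ∧ HasPosSpectrum S

noncomputable def absMat (Y : Matrix (Fin n) (Fin n) ℂ) : Matrix (Fin n) (Fin n) ℂ :=
  (Matrix.posSemidef_conjTranspose_mul_self Y).sqrt

noncomputable def posPart (H : Matrix (Fin n) (Fin n) ℂ) : Matrix (Fin n) (Fin n) ℂ :=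
  ((1 : ℂ) / 2) • (absMat H + H)

end Heron

open scoped MatrixOrder

open Polynomial in
lemma SemiconjBy.aeval {R A : Type*} [CommSemiring R] [Semiring A] [Algebra R A] {d x y : A}
    (h : SemiconjBy d x y) (p : R[X]) : SemiconjBy d (aeval x p) (aeval y p) := by
  induction p using Polynomial.induction_on' with
  | add p q hp hq => simpa only [map_add] using hp.add_right hq
  | monomial k r =>
    simpa only [aeval_monomial] using
      SemiconjBy.mul_right (Algebra.commute_algebraMap_left r d).symm (h.pow_right k)

namespace Matrix

variable {𝕜 : Type*} [RCLike 𝕜] {m : Type*} [Fintype m]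

/-- The trace of `Cᴴ C` for the skew-Hermitian `C = AU - UA` collapses to `tr (A [U, C]) = 0`. -/
lemma IsHermitian.commute_of_commute_commutator {A U : Matrix m m 𝕜} (hA : A.IsHermitian)
    (hU : U.IsHermitian) (h : Commute U (A * U - U * A)) : Commute A U := by
  set C := A * U - U * A with hC
  have hCH : Cᴴ = -C := by
    rw [hC, conjTranspose_sub, conjTranspose_mul, conjTranspose_mul, hA.eq, hU.eq, neg_sub]
  have htrace : (Cᴴ * C).trace = 0 := by
    have hCC : C * C = A * (U * C) - U * (A * C) := by rw [hC]; noncomm_ring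
    rw [hCH, Matrix.neg_mul, trace_neg, neg_eq_zero, hCC, trace_sub, sub_eq_zero,
      trace_mul_comm U, Matrix.mul_assoc, ← h.eq]
  exact sub_eq_zero.mp (trace_conjTranspose_mul_self_eq_zero_iff.mp htrace)

lemma IsHermitian.mul_mul_add_mul_mul_eq_iff_commute {A U : Matrix m m 𝕜} (hA : A.IsHermitian)
    (hU : U.IsHermitian) :
    U * A * U + U * A * U = A * (U * U) + U * U * A ↔ Commute A U := by
  refine ⟨fun h ↦ hA.commute_of_commute_commutator hU ?_, fun h ↦ ?_⟩
  · rw [commute_iff_eq, ← sub_eq_zero]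
    calc U * (A * U - U * A) - (A * U - U * A) * U
        = U * A * U + U * A * U - (A * (U * U) + U * U * A) := by noncomm_ring
      _ = 0 := by rw [h, sub_self]
  · rw [← h.eq, Matrix.mul_assoc, (h.mul_right h).eq]

variable [DecidableEq m]

/-- `D Q = P D` forces `D = 0` once `P` and `Q` share no eigenvalue, since then
`χ_Q(P)` is invertible while `χ_Q(P) D = D χ_Q(Q) = 0`. -/
theorem eq_zero_of_semiconjBy_of_disjoint_spectrum {K : Type*} [Field K] [IsAlgClosed K]
    {D P Q : Matrix m m K} (h : SemiconjBy D Q P)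
    (hPQ : Disjoint (spectrum K P) (spectrum K Q)) : D = 0 := by
  nontriviality Matrix m m K
  have hunit : IsUnit (Polynomial.aeval P Q.charpoly) := by
    rw [← spectrum.zero_notMem_iff K, spectrum.map_polynomial_aeval_of_nonempty _ _
      (spectrum.nonempty_of_isAlgClosed_of_finiteDimensional K P)]
    rintro ⟨μ, hμP, hμ⟩
    exact hPQ.notMem_of_mem_left hμP (mem_spectrum_iff_isRoot_charpoly.mpr hμ)
  rw [← hunit.mul_right_eq_zero, ← (h.aeval _).eq, aeval_self_charpoly, Matrix.mul_zero]

namespace PosSemidef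

variable {A : Matrix m m 𝕜}

lemma sqrt_eq_cfcSqrt (hA : A.PosSemidef) : hA.sqrt = CFC.sqrt A := by
  rw [CFC.sqrt_eq_real_sqrt A hA.nonneg, cfcₙ_eq_cfc, hA.1.cfc_eq, IsHermitian.cfc,
    Unitary.conjStarAlgAut_apply]
  rfl

lemma sqrt_mul_self (hA : A.PosSemidef) : hA.sqrt * hA.sqrt = A := by
  rw [sqrt_eq_cfcSqrt, CFC.sqrt_mul_sqrt_self A hA.nonneg]

lemma commute_sqrt {C : Matrix m m 𝕜} (hA : A.PosSemidef) (h : Commute C A) :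
    Commute C hA.sqrt := by
  rw [sqrt_eq_cfcSqrt, CFC.sqrt_eq_real_sqrt A hA.nonneg, cfcₙ_eq_cfc]
  exact (h.symm.cfc_real _).symm

end PosSemidef

lemma PosDef.mul_mul_same_of_isHermitian {S T : Matrix m m 𝕜} (hT : T.PosDef)
    (hS : S.IsHermitian) (hSu : IsUnit S) : (S * T * S).PosDef := by
  simpa only [star_eq_conjTranspose, hS.eq] using
    (IsUnit.posDef_star_right_conjugate_iff hSu).mpr hT

lemma PosDef.posDef_sqrt {A : Matrix m m 𝕜} (hA : A.PosDef) : hA.posSemidef.sqrt.PosDef := by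
  rw [PosSemidef.sqrt_eq_cfcSqrt, ← isStrictlyPositive_iff_posDef]
  exact hA.isStrictlyPositive.sqrt

end Matrix

namespace Heron

variable {n : ℕ}

lemma hasPosSpectrum_of_posDef {M : Matrix (Fin n) (Fin n) ℂ} (hM : M.PosDef) :
    HasPosSpectrum M := by
  intro z hz
  rw [hM.isHermitian.spectrum_eq_image_range] at hz
  obtain ⟨_, ⟨i, rfl⟩, rfl⟩ := hz
  exact ⟨hM.eigenvalues_pos i, Complex.ofReal_im _⟩

lemma HasPosSpectrum.conj {M g : Matrix (Fin n) (Fin n) ℂ} (hg : IsUnit g)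
    (h : HasPosSpectrum M) : HasPosSpectrum (g * M * g⁻¹) := by
  intro z hz
  rw [← hg.unit_spec, ← coe_units_inv, spectrum.units_conjugate] at hz
  exact h z hz

/-- `A X` is similar to the positive definite `A^{1/2} X A^{1/2}`. -/
lemma hasPosSpectrum_mul {A X : Matrix (Fin n) (Fin n) ℂ} (hA : A.PosDef) (hX : X.PosDef) :
    HasPosSpectrum (A * X) := by
  set P := hA.posSemidef.sqrt
  have hP : P.PosDef := hA.posDef_sqrt
  have hPXP : (P * X * P).PosDef := hX.mul_mul_same_of_isHermitian hP.isHermitian hP.isUnit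
  have hPP : P * P = A := hA.posSemidef.sqrt_mul_self
  convert (hasPosSpectrum_of_posDef hPXP).conj hP.isUnit using 1
  rw [← hPP]
  simp only [Matrix.mul_assoc, mul_nonsing_inv _ ((isUnit_iff_isUnit_det P).mp hP.isUnit),
    Matrix.mul_one]

/-- A principal square root is unique: two of them differ by a solution `D` of
`D Q = (-P) D`, and `-P`, `Q` have spectra in opposite half-planes. -/
lemma IsPrincipalSqrt.unique {M P Q : Matrix (Fin n) (Fin n) ℂ} (hP : IsPrincipalSqrt M P)
    (hQ : IsPrincipalSqrt M Q) : P = Q := by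
  refine sub_eq_zero.mp (eq_zero_of_semiconjBy_of_disjoint_spectrum (P := -P) (Q := Q) ?_ ?_)
  · have hPQ : P * P = Q * Q := hP.1.trans hQ.1.symm
    rw [SemiconjBy, Matrix.sub_mul, ← hPQ]
    noncomm_ring
  · rw [Set.disjoint_left, ← spectrum.neg_eq]
    intro z hzP hzQ
    linarith [(hP.2 _ hzP).1, (hQ.2 _ hzQ).1, Complex.neg_re z]

variable {A B : Matrix (Fin n) (Fin n) ℂ}

lemma exists_geomMean_eq (hA : A.PosDef) (hB : B.PosDef) :
    ∃ R : Matrix (Fin n) (Fin n) ℂ, R.PosDef ∧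
      R * R = hA.posSemidef.sqrt⁻¹ * B * hA.posSemidef.sqrt⁻¹ ∧
      (∀ C, Commute C (hA.posSemidef.sqrt⁻¹ * B * hA.posSemidef.sqrt⁻¹) → Commute C R) ∧
      geomMean hA hB = hA.posSemidef.sqrt * R * hA.posSemidef.sqrt := by
  have hP := hA.posDef_sqrt
  have hW := hB.mul_mul_same_of_isHermitian hP.isHermitian.inv
    (isUnit_nonsing_inv_iff.mpr hP.isUnit)
  exact ⟨_, hW.posDef_sqrt, hW.posSemidef.sqrt_mul_self,
    fun C hC ↦ hW.posSemidef.commute_sqrt hC, rfl⟩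

lemma geomMean_posDef (hA : A.PosDef) (hB : B.PosDef) : (geomMean hA hB).PosDef := by
  obtain ⟨R, hR, -, -, hgm⟩ := exists_geomMean_eq hA hB
  have hP := hA.posDef_sqrt
  rw [hgm]
  exact hR.mul_mul_same_of_isHermitian hP.isHermitian hP.isUnit

lemma geomMean_mul_inv_mul_geomMean (hA : A.PosDef) (hB : B.PosDef) :
    geomMean hA hB * A⁻¹ * geomMean hA hB = B := by
  obtain ⟨R, -, hRR, -, hgm⟩ := exists_geomMean_eq hA hB
  set P := hA.posSemidef.sqrt
  have hP : IsUnit P.det := (isUnit_iff_isUnit_det P).mp hA.posDef_sqrt.isUnit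
  have hAinv : A⁻¹ = P⁻¹ * P⁻¹ := by rw [← hA.posSemidef.sqrt_mul_self, Matrix.mul_inv_rev]
  calc geomMean hA hB * A⁻¹ * geomMean hA hB
      = P * R * (P * P⁻¹) * (P⁻¹ * P) * R * P := by rw [hgm, hAinv]; noncomm_ring
    _ = P * (R * R) * P := by rw [mul_nonsing_inv _ hP, nonsing_inv_mul _ hP]; noncomm_ring
    _ = (P * P⁻¹) * B * (P⁻¹ * P) := by rw [hRR]; noncomm_ring
    _ = B := by rw [mul_nonsing_inv _ hP, nonsing_inv_mul _ hP, Matrix.one_mul, Matrix.mul_one]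

lemma commute_geomMean {C : Matrix (Fin n) (Fin n) ℂ} (hA : A.PosDef) (hB : B.PosDef)
    (hCA : Commute C A) (hCB : Commute C B) : Commute C (geomMean hA hB) := by
  obtain ⟨R, -, -, hCR, hgm⟩ := exists_geomMean_eq hA hB
  have hCP := hA.posSemidef.commute_sqrt hCA
  have hCPinv : Commute C hA.posSemidef.sqrt⁻¹ := by
    simpa using Matrix.Commute.zpow_right hCP (-1)
  rw [hgm]
  exact (hCP.mul_right (hCR C ((hCPinv.mul_right hCB).mul_right hCPinv))).mul_right hCP

/-- equality `a²A + b²B + 2ab(A ♮ B) = W_{a,b}(A,B)` holds iff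
`A` and `B` commute. -/
theorem spectral_heron_equality_iff_commute {n : ℕ}
    (A B S T : Matrix (Fin n) (Fin n) ℂ)
    (hA : A.PosDef) (hB : B.PosDef) (a b : ℝ) (ha : 0 < a) (hb : 0 < b)
    (hS : IsPrincipalSqrt (A * B) S) (hT : IsPrincipalSqrt (B * A) T) :
    ((a : ℂ) ^ 2) • A + ((b : ℂ) ^ 2) • B + (2 * (a : ℂ) * b) • specMean hA hB
        = ((a : ℂ) ^ 2) • A + ((b : ℂ) ^ 2) • B + ((a : ℂ) * b) • (S + T)
      ↔ A * B = B * A := by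
  set X := geomMean hA.inv hB
  have hX : X.PosDef := geomMean_posDef hA.inv hB
  have hXAX : X * A * X = B := by
    simpa only [nonsing_inv_nonsing_inv A ((isUnit_iff_isUnit_det A).mp hA.isUnit)] using
      geomMean_mul_inv_mul_geomMean hA.inv hB
  obtain rfl : S = A * X :=
    hS.unique ⟨by rw [← hXAX]; noncomm_ring, hasPosSpectrum_mul hA hX⟩
  obtain rfl : T = X * A :=
    hT.unique ⟨by rw [← hXAX]; noncomm_ring, hasPosSpectrum_mul hX hA⟩
  set U := (geomMean_posSemidef hA.inv hB).sqrt
  have hUU : U * U = X := PosSemidef.sqrt_mul_self _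
  have hM : specMean hA hB = U * A * U := rfl
  have hab : (a : ℂ) * b ≠ 0 :=
    mul_ne_zero (Complex.ofReal_ne_zero.mpr ha.ne') (Complex.ofReal_ne_zero.mpr hb.ne')
  have hscale :
      (2 * (a : ℂ) * b) • specMean hA hB = ((a : ℂ) * b) • (U * A * U + U * A * U) := by
    rw [hM, ← two_smul ℂ, smul_smul]; ring_nf
  rw [add_right_inj, hscale, smul_right_inj hab, ← hUU,
    hA.isHermitian.mul_mul_add_mul_mul_eq_iff_commute
      (geomMean_posSemidef hA.inv hB).posSemidef_sqrt.isHermitian, ← commute_iff_eq]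
  constructor
  · intro hAU
    rw [← hXAX, ← hUU]
    have hAX := hAU.mul_right hAU
    exact (hAX.mul_right (Commute.refl A)).mul_right hAX
  · intro hAB
    refine PosSemidef.commute_sqrt _ (commute_geomMean hA.inv hB ?_ hAB)
    simpa using Matrix.Commute.self_zpow A (-1)

end Heron
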